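/- arXiv:1512.03888 — 2 statements merged into one kernel-verified Lean document; each statement's English description precedes it below -/
import Mathlib

section
/- The strong-substructure relation ≼ is preserved by intersections: if A ⊆ B are finite sets of vertices with A ≼ B, then for every finite set C of vertices one has A ∩ C ≼ B ∩ C; that is, δ_r(X) > δ_r(A ∩ C) for every X with A ∩ C ⊊ X ⊆ B ∩ C. -/
/-! Both `|·|` and the number of induced edges behave well under union and intersection: the
former is modular, the latter supermodular, so for `r ≥ 0` the predimension is submodular,
`δ(A ∪ X) + δ(A ∩ X) ≤ δ(A) + δ(X)`. If `A ∩ C ⊊ X ⊆ B ∩ C`, then `A ∩ X = A ∩ C` and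
`A ⊊ A ∪ X ⊆ B`, so `δ(A) < δ(A ∪ X) ≤ δ(A) + δ(X) - δ(A ∩ C)`. -/

/-- The number of edges of `G` with both endpoints in the finite set `s`. -/
noncomputable def eCount {V : Type*} (G : SimpleGraph V) (s : Finset V) : ℕ :=
  {e : Sym2 V | e ∈ G.edgeSet ∧ ∀ v ∈ e, v ∈ s}.ncard

/-- The rational predimension `δ_r(s) = |s| - r·e(s)`. -/
noncomputable def pdimQ {V : Type*} (G : SimpleGraph V) (r : ℚ) (s : Finset V) : ℚ :=
  (s.card : ℚ) - r * (eCount G s : ℚ)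

/-- `A ≼ B`: `A ⊆ B` and `δ_r(B₀) > δ_r(A)` for every `B₀` with `A ⊊ B₀ ⊆ B`. -/
def Strong {V : Type*} (G : SimpleGraph V) (r : ℚ) (A B : Finset V) : Prop :=
  A ⊆ B ∧ ∀ B₀ : Finset V, A ⊂ B₀ → B₀ ⊆ B → pdimQ G r A < pdimQ G r B₀

namespace Finset

variable {α : Type*} [DecidableEq α]

lemma sym2_inter (s t : Finset α) : (s ∩ t).sym2 = s.sym2 ∩ t.sym2 := by
  ext e
  simp only [mem_inter, mem_sym2_iff, forall_and]

lemma sym2_union_subset (s t : Finset α) : s.sym2 ∪ t.sym2 ⊆ (s ∪ t).sym2 :=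
  union_subset (sym2_mono subset_union_left) (sym2_mono subset_union_right)

end Finset

section Predimension

variable {V : Type*} (G : SimpleGraph V)

lemma eCount_eq_ncard_edgeSet_inter_sym2 (s : Finset V) :
    eCount G s = (G.edgeSet ∩ ↑s.sym2).ncard := by
  simp only [eCount, Set.inter_def, Finset.mem_coe, Finset.mem_sym2_iff]

variable [DecidableEq V]

lemma eCount_add_eCount_le (s t : Finset V) :
    eCount G s + eCount G t ≤ eCount G (s ∪ t) + eCount G (s ∩ t) := by
  simp only [eCount_eq_ncard_edgeSet_inter_sym2]
  have hfin (u : Finset V) : (G.edgeSet ∩ ↑u.sym2).Finite :=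
    u.sym2.finite_toSet.inter_of_right _
  have hunion : (G.edgeSet ∩ ↑s.sym2) ∪ (G.edgeSet ∩ ↑t.sym2) ⊆ G.edgeSet ∩ ↑(s ∪ t).sym2 := by
    rw [← Set.inter_union_distrib_left, ← Finset.coe_union]
    exact Set.inter_subset_inter_right _ (Finset.coe_subset.2 (Finset.sym2_union_subset s t))
  have hinter : (G.edgeSet ∩ ↑s.sym2) ∩ (G.edgeSet ∩ ↑t.sym2) = G.edgeSet ∩ ↑(s ∩ t).sym2 := by
    rw [← Set.inter_inter_distrib_left, Finset.sym2_inter, Finset.coe_inter]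
  rw [← Set.ncard_union_add_ncard_inter _ _ (hfin s) (hfin t), hinter]
  exact Nat.add_le_add_right (Set.ncard_le_ncard hunion (hfin _)) _

lemma pdimQ_union_add_pdimQ_inter_le {r : ℚ} (hr : 0 ≤ r) (s t : Finset V) :
    pdimQ G r (s ∪ t) + pdimQ G r (s ∩ t) ≤ pdimQ G r s + pdimQ G r t := by
  have hcard : ((s ∪ t).card : ℚ) + (s ∩ t).card = s.card + t.card := by
    exact_mod_cast Finset.card_union_add_card_inter s t
  have hedges : (eCount G s : ℚ) + eCount G t ≤ eCount G (s ∪ t) + eCount G (s ∩ t) := by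
    exact_mod_cast eCount_add_eCount_le G s t
  simp only [pdimQ]
  nlinarith [mul_le_mul_of_nonneg_left hedges hr]

end Predimension

theorem strong_inter_general {V : Type*} [DecidableEq V] (G : SimpleGraph V) (r : ℚ)
    (hr0 : 0 < r) (A B : Finset V)
    (h : Strong G r A B) (C : Finset V) :
    Strong G r (A ∩ C) (B ∩ C) := by
  refine ⟨Finset.inter_subset_inter_right h.1, fun X hX hXB => ?_⟩
  have hXC : X ⊆ C := hXB.trans Finset.inter_subset_right
  have hAX : A ∩ X = A ∩ C :=
    le_antisymm (Finset.inter_subset_inter_left hXC) (Finset.subset_inter Finset.inter_subset_left hX.subset)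
  have hAAX : A ⊂ A ∪ X := by
    obtain ⟨x, hxX, hxAC⟩ := Finset.exists_of_ssubset hX
    exact Finset.ssubset_iff_subset_ne.2 ⟨Finset.subset_union_left, fun hA =>
      hxAC (Finset.mem_inter.2 ⟨hA ▸ Finset.mem_union_right A hxX, hXC hxX⟩)⟩
  have hAXB : A ∪ X ⊆ B := Finset.union_subset h.1 (hXB.trans Finset.inter_subset_left)
  have hsub := pdimQ_union_add_pdimQ_inter_le G hr0.le A X
  rw [hAX] at hsub
  linarith [h.2 (A ∪ X) hAAX hAXB]

/-- The strong-substructure relation is preserved by intersections. -/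
theorem strong_inter {V : Type*} [DecidableEq V] (G : SimpleGraph V) (r : ℚ)
    (hr0 : 0 < r) (hr1 : r < 1) (A B : Finset V) (hAB : A ⊆ B)
    (h : Strong G r A B) (C : Finset V) :
    Strong G r (A ∩ C) (B ∩ C) :=
  strong_inter_general G r hr0 A B h C
end

section
/- Transitivity of the strong-substructure relation ≼: if A ⊆ B ⊆ C are finite sets of vertices of a simple graph G with A ≼ B and B ≼ C, then A ≼ C. -/
lemma edgeSetFinite {V : Type*} (G : SimpleGraph V) (s : Finset V) :
    {e : Sym2 V | e ∈ G.edgeSet ∧ ∀ v ∈ e, v ∈ s}.Finite := by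
  apply Set.Finite.subset (Set.Finite.image (fun p : V × V => s(p.1, p.2))
    (Set.finite_coe_iff.mp (by exact Set.Finite.to_subtype ((s : Set V) ×ˢ (s : Set V)).toFinite)))
  intro e he
  induction e with
  | _ a b =>
    exact ⟨(a, b), ⟨he.2 a (by simp), he.2 b (by simp)⟩, rfl⟩

lemma eCount_supermodular {V : Type*} [DecidableEq V] (G : SimpleGraph V) (X Y : Finset V) :
    eCount G X + eCount G Y ≤ eCount G (X ∩ Y) + eCount G (X ∪ Y) := by
  set S := {e : Sym2 V | e ∈ G.edgeSet ∧ ∀ v ∈ e, v ∈ X}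
  set T := {e : Sym2 V | e ∈ G.edgeSet ∧ ∀ v ∈ e, v ∈ Y}
  have hS : S.Finite := edgeSetFinite G X
  have hT : T.Finite := edgeSetFinite G Y
  have hinter : S ∩ T = {e : Sym2 V | e ∈ G.edgeSet ∧ ∀ v ∈ e, v ∈ X ∩ Y} := by
    ext e
    simp only [Set.mem_inter_iff, Set.mem_setOf_eq, Finset.mem_inter]
    constructor
    · rintro ⟨⟨h, hX⟩, ⟨_, hY⟩⟩
      exact ⟨h, fun v hv => ⟨hX v hv, hY v hv⟩⟩
    · rintro ⟨h, hXY⟩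
      exact ⟨⟨h, fun v hv => (hXY v hv).1⟩, ⟨h, fun v hv => (hXY v hv).2⟩⟩
  have hunion : S ∪ T ⊆ {e : Sym2 V | e ∈ G.edgeSet ∧ ∀ v ∈ e, v ∈ X ∪ Y} := by
    rintro e (⟨h, hX⟩ | ⟨h, hY⟩)
    · exact ⟨h, fun v hv => Finset.mem_union_left _ (hX v hv)⟩
    · exact ⟨h, fun v hv => Finset.mem_union_right _ (hY v hv)⟩
  have key : (S ∪ T).ncard + (S ∩ T).ncard = S.ncard + T.ncard :=
    Set.ncard_union_add_ncard_inter S T hS hT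
  have h1 : (S ∩ T).ncard = eCount G (X ∩ Y) := by rw [hinter]; rfl
  have h2 : (S ∪ T).ncard ≤ eCount G (X ∪ Y) :=
    Set.ncard_le_ncard hunion (edgeSetFinite G (X ∪ Y))
  calc eCount G X + eCount G Y = S.ncard + T.ncard := rfl
    _ = (S ∪ T).ncard + (S ∩ T).ncard := key.symm
    _ ≤ eCount G (X ∪ Y) + eCount G (X ∩ Y) := by omega
    _ = eCount G (X ∩ Y) + eCount G (X ∪ Y) := by omega

lemma pdim_submodular {V : Type*} [DecidableEq V] (G : SimpleGraph V) (r : ℚ) (hr0 : 0 < r)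
    (X Y : Finset V) :
    pdimQ G r (X ∩ Y) + pdimQ G r (X ∪ Y) ≤ pdimQ G r X + pdimQ G r Y := by
  have hcard : ((X ∩ Y).card : ℚ) + ((X ∪ Y).card : ℚ) = (X.card : ℚ) + (Y.card : ℚ) := by
    have := Finset.card_inter_add_card_union X Y
    exact_mod_cast congrArg (Nat.cast : ℕ → ℚ) this
  have he : (eCount G X : ℚ) + (eCount G Y : ℚ) ≤
      (eCount G (X ∩ Y) : ℚ) + (eCount G (X ∪ Y) : ℚ) := by
    exact_mod_cast eCount_supermodular G X Y
  unfold pdimQ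
  nlinarith [mul_le_mul_of_nonneg_left he hr0.le]

/-- Transitivity of the strong-substructure relation `≼`. -/
theorem strong_trans {V : Type*} (G : SimpleGraph V) (r : ℚ)
    (hr0 : 0 < r) (hr1 : r < 1) (A B C : Finset V)
    (hAB : A ⊆ B) (hBC : B ⊆ C)
    (h1 : Strong G r A B) (h2 : Strong G r B C) :
    Strong G r A C := by
  classical
  refine ⟨hAB.trans hBC, fun C₀ hAC₀ hC₀C => ?_⟩
  by_cases hCB : C₀ ⊆ B
  · exact h1.2 C₀ hAC₀ hCB
  · -- C₀ ⊄ B, so B ⊊ C₀ ∪ B ⊆ C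
    have hBs : B ⊂ C₀ ∪ B := by
      refine ⟨Finset.subset_union_right, fun hsub => hCB ?_⟩
      exact Finset.union_subset_iff.mp hsub |>.1
    have hub : C₀ ∪ B ⊆ C := Finset.union_subset hC₀C hBC
    have hBlt : pdimQ G r B < pdimQ G r (C₀ ∪ B) := h2.2 _ hBs hub
    have hAsub : A ⊆ C₀ ∩ B := Finset.subset_inter hAC₀.subset hAB
    have hAle : pdimQ G r A ≤ pdimQ G r (C₀ ∩ B) := by
      rcases eq_or_ne A (C₀ ∩ B) with h | h
      · rw [← h]
      · exact (h1.2 _ ⟨hAsub, fun hle => h (Finset.Subset.antisymm hAsub hle)⟩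
          (Finset.inter_subset_right)).le
    have := pdim_submodular G r hr0 C₀ B
    linarith
end
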